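/- arXiv:2605.21067 — 3 statements merged into one kernel-verified Lean document; each statement's English description precedes it below -/
import Mathlib

section
/- Reflection of binomial convolutions: let (g_ℓ)_{ℓ=0}^{r} be complex-valued functions on the upper half-plane satisfying g_ℓ(-1/z)/z^{w-r-ℓ} = Σ_{m=0}^{r-ℓ} C(r-ℓ, m) g_{ℓ+m}(z) z^{r-ℓ-m} for all ℓ. Then for every 0 ≤ n ≤ r, (1/z^{w-r}) Σ_{ℓ=0}^{n} C(n,ℓ) g_ℓ(-1/z) (-1/z)^{n-ℓ} = (-1)^n Σ_{m=0}^{r-n} C(r-n, m) g_m(z) z^{r-n-m}. -/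
/-!
Read `g_k(z)` umbrally as `X^k`: with `L` the linear functional on `ℂ[X]` sending `X^k` to
`g_k(z)`, the hypothesis says `g_ℓ(-1/z) = z^(w-r-ℓ) L(X^ℓ (X+z)^(r-ℓ))`. After the powers of `z`
cancel, the left side becomes `z^(-n) L(∑_ℓ C(n,ℓ) X^ℓ (-(X+z))^(n-ℓ) (X+z)^(r-n))`, which by the
binomial theorem is `z^(-n) L((-z)^n (X+z)^(r-n)) = (-1)^n L((X+z)^(r-n))`, the right side.
-/

open Polynomial Finset

namespace Polynomial

variable {R : Type*} [CommSemiring R]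

noncomputable def umbralEval (a : ℕ → R) : R[X] →ₗ[R] R :=
  lsum fun k => LinearMap.toSpanSingleton R R (a k)

theorem umbralEval_monomial (a : ℕ → R) (k : ℕ) (c : R) :
    umbralEval a (monomial k c) = c * a k := by
  simp [umbralEval, lsum_apply, sum_monomial_index]

theorem umbralEval_C_mul (a : ℕ → R) (c : R) (p : R[X]) :
    umbralEval a (C c * p) = c * umbralEval a p := by
  rw [C_mul', map_smul, smul_eq_mul]

theorem umbralEval_X_pow_mul_X_add_C_pow (a : ℕ → R) (ℓ N : ℕ) (c : R) :
    umbralEval a (X ^ ℓ * (X + C c) ^ N) =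
      ∑ m ∈ range (N + 1), (N.choose m : R) * a (ℓ + m) * c ^ (N - m) := by
  have hexpand : X ^ ℓ * (X + C c) ^ N =
      ∑ m ∈ range (N + 1), monomial (ℓ + m) ((N.choose m : R) * c ^ (N - m)) := by
    simp only [add_pow, mul_sum, ← C_mul_X_pow_eq_monomial, C_mul, C_pow, C_eq_natCast, pow_add]
    exact sum_congr rfl fun m _ => by ring
  simp only [hexpand, map_sum, umbralEval_monomial]
  exact sum_congr rfl fun m _ => by ring

theorem umbralEval_X_add_C_pow (a : ℕ → R) (N : ℕ) (c : R) :
    umbralEval a ((X + C c) ^ N) =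
      ∑ m ∈ range (N + 1), (N.choose m : R) * a m * c ^ (N - m) := by
  simpa using umbralEval_X_pow_mul_X_add_C_pow a 0 N c

end Polynomial

theorem sum_range_choose_mul_neg_one_pow_mul_pow_mul_pow {R : Type*} [CommRing R] (x y : R)
    {n r : ℕ} (hn : n ≤ r) :
    ∑ ℓ ∈ range (n + 1), (n.choose ℓ : R) * (-1) ^ (n - ℓ) * x ^ ℓ * y ^ (r - ℓ) =
      (x - y) ^ n * y ^ (r - n) := by
  rw [sub_eq_add_neg, add_pow, sum_mul]
  refine sum_congr rfl fun ℓ hℓ => ?_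
  have hℓn : ℓ ≤ n := Nat.lt_succ_iff.mp (mem_range.mp hℓ)
  rw [neg_pow y, show r - ℓ = (n - ℓ) + (r - n) by omega, pow_add]
  ring

theorem one_div_zpow_mul_zpow_sub_mul_neg_one_div_pow {K : Type*} [Field K] {z : K} (hz : z ≠ 0)
    (e : ℤ) (a : K) {ℓ n : ℕ} (hℓn : ℓ ≤ n) :
    1 / z ^ e * (z ^ (e - ℓ) * a) * (-1 / z) ^ (n - ℓ) = (-1) ^ (n - ℓ) * a / z ^ n := by
  obtain ⟨k, rfl⟩ := Nat.exists_eq_add_of_le hℓn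
  rw [Nat.add_sub_cancel_left, zpow_sub₀ hz, zpow_natCast, div_pow]
  field_simp
  ring

/-- Reflection of binomial convolutions (Corollary to the main Proposition).
`g z ℓ` plays the role of `g_ℓ(z)`; the hypothesis encodes the transformation law of
the `g_ℓ` under `S : z ↦ -1/z`. -/
theorem stmt9 (w : ℤ) (r : ℕ) (g : ℂ → ℕ → ℂ) (z : ℂ) (hz : z ≠ 0)
    (hg : ∀ ℓ ≤ r, g (-1 / z) ℓ / z ^ (w - (r : ℤ) - (ℓ : ℤ)) =
      ∑ m ∈ Finset.range (r - ℓ + 1),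
        (Nat.choose (r - ℓ) m : ℂ) * g z (ℓ + m) * z ^ (r - ℓ - m)) :
    ∀ n ≤ r,
      (1 / z ^ (w - (r : ℤ))) * ∑ ℓ ∈ Finset.range (n + 1),
          (Nat.choose n ℓ : ℂ) * g (-1 / z) ℓ * (-1 / z) ^ (n - ℓ) =
        (-1 : ℂ) ^ n * ∑ m ∈ Finset.range (r - n + 1),
          (Nat.choose (r - n) m : ℂ) * g z m * z ^ (r - n - m) := by
  intro n hn
  set L := umbralEval (g z)
  have hgL : ∀ ℓ ≤ r, g (-1 / z) ℓ = z ^ (w - r - ℓ) * L (X ^ ℓ * (X + C z) ^ (r - ℓ)) :=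
    fun ℓ hℓ => by
      rw [umbralEval_X_pow_mul_X_add_C_pow, ← hg ℓ hℓ, mul_div_cancel₀ _ (zpow_ne_zero _ hz)]
  calc _ = L (∑ ℓ ∈ range (n + 1),
          (n.choose ℓ : ℂ[X]) * (-1) ^ (n - ℓ) * X ^ ℓ * (X + C z) ^ (r - ℓ)) / z ^ n := by
        rw [map_sum, sum_div, mul_sum]
        refine sum_congr rfl fun ℓ hℓ => ?_
        have hℓn : ℓ ≤ n := Nat.lt_succ_iff.mp (mem_range.mp hℓ)
        have hscale := one_div_zpow_mul_zpow_sub_mul_neg_one_div_pow hz (w - r)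
          (L (X ^ ℓ * (X + C z) ^ (r - ℓ))) hℓn
        rw [hgL ℓ (hℓn.trans hn)]
        simp only [← C_eq_natCast, ← C_1, ← C_neg, ← C_pow, mul_assoc, ← C_mul, umbralEval_C_mul, L]
        linear_combination (n.choose ℓ : ℂ) * hscale
    _ = L (C ((-z) ^ n) * (X + C z) ^ (r - n)) / z ^ n := by
        rw [sum_range_choose_mul_neg_one_pow_mul_pow_mul_pow _ _ hn, sub_add_cancel_left, ← C_neg,
          C_pow]
    _ = _ := by
        rw [umbralEval_C_mul, umbralEval_X_add_C_pow, neg_pow]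
        field_simp
end

section
/- Abstract transformation law: suppose sequences (F_k)_{k=0}^r and (G_k)_{k=0}^r of complex numbers (depending on z in the upper half-plane) satisfy F_n(z) = Σ_{k=0}^{n} C(n,k) G_k(z) z^{n-k}, and the G's satisfy G_ℓ(-1/z) = z^{w-r-ℓ}·Σ_{m=0}^{r-ℓ} C(r-ℓ,m) G_{ℓ+m}(z) z^{r-ℓ-m}. Then F_k(-1/z)/z^{w-r} = (-1)^k F_{r-k}(z) for all 0 ≤ k ≤ r. -/
/-!
Umbral proof: let `L` be the linear functional on `ℂ[X]` with `L (X ^ n) = G_n(z)`. Then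
`F_n(z) = L ((X + z) ^ n)`, and the hypothesis reads
`G_ℓ(-1/z) = z ^ (w-r-ℓ) L (X ^ ℓ (X + z) ^ (r-ℓ))`.
Expanding `F_k(-1/z)` binomially, every term becomes `z ^ (w-r-k)` times `L` of a polynomial, and
these polynomials sum to `(X - (X + z)) ^ k (X + z) ^ (r-k) = (-z) ^ k (X + z) ^ (r-k)`.
-/

open Finset Polynomial

section Umbral

variable {R : Type*} [CommSemiring R]

noncomputable def umbral (g : ℕ → R) : R[X] →ₗ[R] R :=
  lsum fun n => LinearMap.mulRight R (g n)

theorem umbral_monomial (g : ℕ → R) (n : ℕ) (a : R) : umbral g (monomial n a) = a * g n := by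
  simp [umbral, sum_monomial_index]

theorem umbral_C_mul (g : ℕ → R) (a : R) (p : R[X]) : umbral g (C a * p) = a * umbral g p := by
  rw [← smul_eq_C_mul, map_smul, smul_eq_mul]

theorem umbral_C_mul_X_pow (g : ℕ → R) (n : ℕ) (a : R) : umbral g (C a * X ^ n) = a * g n := by
  rw [C_mul_X_pow_eq_monomial, umbral_monomial]

theorem umbral_X_pow_mul (g : ℕ → R) (ℓ : ℕ) (p : R[X]) :
    umbral g (X ^ ℓ * p) = umbral (fun n => g (ℓ + n)) p := by
  induction p using Polynomial.induction_on' with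
  | add p q hp hq => rw [mul_add, map_add, map_add, hp, hq]
  | monomial n a => rw [X_pow_mul_monomial, umbral_monomial, umbral_monomial, add_comm]

theorem umbral_X_add_C_pow (g : ℕ → R) (u : R) (n : ℕ) :
    umbral g ((X + C u) ^ n) = ∑ k ∈ range (n + 1), (n.choose k : R) * g k * u ^ (n - k) := by
  simp_rw [add_pow, map_sum, ← C_pow, ← C_eq_natCast, mul_assoc, ← C_mul, mul_comm (X ^ _),
    umbral_C_mul_X_pow]
  exact sum_congr rfl fun k _ => by ring

end Umbral

theorem sum_neg_one_pow_mul_choose_mul_pow_mul_pow {R : Type*} [CommRing R] (a b : R) {k r : ℕ}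
    (hk : k ≤ r) :
    ∑ j ∈ range (k + 1), (-1) ^ (k - j) * (k.choose j : R) * a ^ j * b ^ (r - j) =
      (a - b) ^ k * b ^ (r - k) := by
  rw [sub_eq_add_neg, add_pow, sum_mul]
  refine sum_congr rfl fun j hj => ?_
  have hjk : j ≤ k := Nat.lt_succ_iff.mp (mem_range.mp hj)
  rw [neg_pow, show r - j = (k - j) + (r - k) by omega, pow_add]
  ring

theorem zpow_sub_natCast_mul_neg_one_div_pow {K : Type*} [Field K] {z : K} (hz : z ≠ 0) (w : ℤ)
    {j k : ℕ} (hjk : j ≤ k) :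
    z ^ (w - j) * (-1 / z) ^ (k - j) = z ^ w * z⁻¹ ^ k * (-1) ^ (k - j) := by
  rw [zpow_sub₀ hz, zpow_natCast, div_eq_mul_inv, ← inv_pow, neg_div, one_div, neg_pow,
    ← pow_mul_pow_sub z⁻¹ hjk]
  ring

/-- Abstract transformation law: `G z ℓ` plays the role of `G_ℓ(z)`, and
`F w n = Σ_{k=0}^{n} C(n,k) G w k · w^{n-k}` is the binomial convolution. Under the
transformation hypothesis on the `G`'s, `F_k(-1/z)/z^{w-r} = (-1)^k F_{r-k}(z)`. -/
theorem stmt10 (w : ℤ) (r : ℕ) (G : ℂ → ℕ → ℂ) (z : ℂ) (hz : z ≠ 0)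
    (F : ℂ → ℕ → ℂ)
    (hF : ∀ u : ℂ, ∀ n : ℕ, F u n =
      ∑ k ∈ Finset.range (n + 1), (Nat.choose n k : ℂ) * G u k * u ^ (n - k))
    (hG : ∀ ℓ ≤ r, G (-1 / z) ℓ =
      z ^ (w - (r : ℤ) - (ℓ : ℤ)) * ∑ m ∈ Finset.range (r - ℓ + 1),
        (Nat.choose (r - ℓ) m : ℂ) * G z (ℓ + m) * z ^ (r - ℓ - m)) :
    ∀ k ≤ r, F (-1 / z) k / z ^ (w - (r : ℤ)) = (-1 : ℂ) ^ k * F z (r - k) := by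
  intro k hk
  have hterm : ∀ j ∈ range (k + 1), (k.choose j : ℂ) * G (-1 / z) j * (-1 / z) ^ (k - j) =
      z ^ (w - r) * z⁻¹ ^ k *
        umbral (G z) (C ((-1 : ℂ) ^ (k - j) * k.choose j) * (X ^ j * (X + C z) ^ (r - j))) := by
    intro j hj
    have hjk : j ≤ k := Nat.lt_succ_iff.mp (mem_range.mp hj)
    rw [hG j (hjk.trans hk), ← umbral_X_add_C_pow, ← umbral_X_pow_mul, umbral_C_mul]
    linear_combination (k.choose j * umbral (G z) (X ^ j * (X + C z) ^ (r - j))) *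
      zpow_sub_natCast_mul_neg_one_div_pow hz (w - r) hjk
  have hsum : ∑ j ∈ range (k + 1),
      C ((-1 : ℂ) ^ (k - j) * k.choose j) * (X ^ j * (X + C z) ^ (r - j)) =
        C ((-z) ^ k) * (X + C z) ^ (r - k) := by
    simp only [map_mul, map_pow, map_neg, map_one, map_natCast, ← mul_assoc]
    rw [sum_neg_one_pow_mul_choose_mul_pow_mul_pow _ _ hk]
    ring
  rw [div_eq_iff (zpow_ne_zero _ hz), hF, sum_congr rfl hterm, ← mul_sum, ← map_sum, hsum,
    umbral_C_mul, umbral_X_add_C_pow, ← hF, neg_pow, inv_pow]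
  field_simp
end

section
/- Exp of creation matrix entry formula: for a ∈ ℂ and the (r+1)×(r+1) creation matrix A_r with (A_r)_{i,j} = i·[i=j+1], the (ℓ,k)-entry of exp(a·A_r) equals a^{ℓ-k}/(ℓ-k)! · ℓ!/k! for ℓ ≥ k and 0 for ℓ < k; equivalently it equals C(ℓ,k)·a^{ℓ-k} for ℓ ≥ k. -/
/-!
The `m`-th power of `A_r` is supported on the `m`-th subdiagonal, with
`(A_r^m)_{ℓ,k} = ℓ!/(ℓ-m)!` when `ℓ = k + m`. Hence `A_r^{r+1} = 0`, the exponential series is a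
finite sum, and only its term `m = ℓ - k` contributes to the `(ℓ,k)` entry, which is
`a^{ℓ-k}/(ℓ-k)! · ℓ!/k! = C(ℓ,k) a^{ℓ-k}`.
-/

/-- The `(r+1)×(r+1)` creation matrix `A_r` with `(A_r)_{i,j} = i` if `i = j+1`, else `0`. -/
def creationMatrix (r : ℕ) : Matrix (Fin (r + 1)) (Fin (r + 1)) ℂ :=
  fun i j => if (i : ℕ) = (j : ℕ) + 1 then (i : ℂ) else 0

open Finset
open scoped Nat

theorem NormedSpace.exp_eq_sum_range_of_pow_eq_zero (𝕂 : Type*) {𝔸 : Type*} [Field 𝕂] [CharZero 𝕂]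
    [Ring 𝔸] [Algebra 𝕂 𝔸] [TopologicalSpace 𝔸] [IsTopologicalRing 𝔸] {x : 𝔸} {n : ℕ}
    (hx : x ^ n = 0) : exp x = ∑ m ∈ range n, (m !⁻¹ : 𝕂) • x ^ m := by
  rw [exp_eq_tsum 𝕂]
  refine tsum_eq_sum fun m hm => ?_
  rw [pow_eq_zero_of_le (by simpa using hm) hx, smul_zero]

theorem creationMatrix_pow_apply (r m : ℕ) (ℓ k : Fin (r + 1)) :
    (creationMatrix r ^ m) ℓ k =
      if (ℓ : ℕ) = k + m then ((ℓ : ℕ).descFactorial m : ℂ) else 0 := by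
  induction m generalizing ℓ with
  | zero => simp [Matrix.one_apply, Fin.ext_iff]
  | succ m ih =>
    rw [pow_succ', Matrix.mul_apply]
    simp only [creationMatrix, ih]
    by_cases hℓ : (ℓ : ℕ) = k + (m + 1)
    · rw [if_pos hℓ, Fintype.sum_eq_single ⟨k + m, by omega⟩]
      · rw [if_pos (by dsimp only; omega), if_pos rfl, hℓ, ← add_assoc, Nat.succ_descFactorial_succ]
        push_cast; ring
      · intro j hj
        rw [ne_eq, Fin.ext_iff] at hj
        simp only [hj, if_false, mul_zero]
    · rw [if_neg hℓ]
      refine sum_eq_zero fun j _ => ?_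
      split_ifs <;> first | omega | simp

theorem creationMatrix_pow_eq_zero (r : ℕ) : creationMatrix r ^ (r + 1) = 0 := by
  ext ℓ k
  rw [creationMatrix_pow_apply, if_neg (by omega), Matrix.zero_apply]

theorem stmt14 (r : ℕ) (a : ℂ) (ℓ k : Fin (r + 1)) :
    NormedSpace.exp (a • creationMatrix r) ℓ k =
      if (k : ℕ) ≤ (ℓ : ℕ) then
        (Nat.choose ℓ k : ℂ) * a ^ ((ℓ : ℕ) - (k : ℕ))
      else 0 := by
  have hnil : (a • creationMatrix r) ^ (r + 1) = 0 := by
    rw [smul_pow, creationMatrix_pow_eq_zero, smul_zero]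
  rw [NormedSpace.exp_eq_sum_range_of_pow_eq_zero ℂ hnil, Matrix.sum_apply]
  simp only [smul_pow, Matrix.smul_apply, creationMatrix_pow_apply, smul_eq_mul]
  split_ifs with hk
  · rw [sum_eq_single ((ℓ : ℕ) - k)]
    · rw [if_pos (by omega), Nat.descFactorial_eq_factorial_mul_choose, Nat.choose_symm hk]
      have hfact : (((ℓ : ℕ) - k)! : ℂ) ≠ 0 := Nat.cast_ne_zero.mpr (Nat.factorial_ne_zero _)
      push_cast
      field_simp
    · intro m _ hm
      rw [if_neg (by omega), mul_zero, mul_zero]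
    · intro h
      exact absurd (mem_range.mpr (by omega)) h
  · refine sum_eq_zero fun m _ => ?_
    rw [if_neg (by omega), mul_zero, mul_zero]
end
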